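/- Assume every solution of dR/dZ = -tan θ + R/(2Z), dθ/dZ = (n-1)(1/cos θ - 1/R) defined on all of (0,∞) (with R > 0, θ ∈ (-π/2,π/2)) converges to (1,0) as Z → ∞ and satisfies R(Z) = 1 + o(1/Z), θ(Z) = 1/(2Z) + o(1/Z). Then any two such solutions are equal: the singular solution is unique. -/

import Mathlib

/-!
Put `u = R̃ - R`, `v = θ̃ - θ` and `L = (n - 1) u² + v²`. By the mean value theorem
`L' = 2 (n - 1) (u² / (2Z) + g v² + e u v)`, where `g` is a difference quotient of `sec` between
`θ` and `θ̃`, and `e` is `1 / (R R̃)` minus one of `tan`. The asymptotics `θ = 1/(2Z) + o(1/Z)`,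
`R = 1 + o(1/Z)` give `g ≥ c / Z` and `e = O(1/Z)` with constants making this quadratic form
positive semidefinite for large `Z`. So `L` is eventually nondecreasing, and as `L ≥ 0` and
`L → 0` it vanishes for large `Z`. On a compact interval of `(0, ∞)` we still have `L' ≥ -C L`,
so `L e^{CZ}` is nondecreasing, and `L` vanishes everywhere.
-/

open Real Filter

/-- `(R, θ)` is a solution of system (3) defined on all of `(0, ∞)`. -/
def IsSingularSolution (n : ℕ) (R θ : ℝ → ℝ) : Prop :=
  (∀ Z > (0 : ℝ), 0 < R Z ∧ θ Z ∈ Set.Ioo (-(π / 2)) (π / 2)) ∧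
  (∀ Z > (0 : ℝ), HasDerivAt R (-Real.tan (θ Z) + R Z / (2 * Z)) Z) ∧
  (∀ Z > (0 : ℝ), HasDerivAt θ (((n : ℝ) - 1) * (1 / Real.cos (θ Z) - 1 / R Z)) Z)

open Set

lemma exists_mem_uIcc_sub_eq_mul_sub {f f' : ℝ → ℝ} {a b : ℝ}
    (hf : ∀ x ∈ uIcc a b, HasDerivAt f (f' x) x) :
    ∃ c ∈ uIcc a b, f b - f a = f' c * (b - a) := by
  wlog hab : a ≤ b generalizing a b
  · obtain ⟨c, hc, h⟩ := this (fun x hx => hf x (uIcc_comm a b ▸ hx)) (le_of_not_ge hab)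
    exact ⟨c, uIcc_comm a b ▸ hc, by linarith⟩
  rcases hab.eq_or_lt with rfl | hab
  · exact ⟨a, left_mem_uIcc, by ring⟩
  rw [uIcc_of_le hab.le] at hf ⊢
  obtain ⟨c, hc, h⟩ := exists_hasDerivAt_eq_slope f f' hab
    (fun x hx => (hf x hx).continuousAt.continuousWithinAt)
    (fun x hx => hf x (Ioo_subset_Icc_self hx))
  exact ⟨c, Ioo_subset_Icc_self hc, by rw [h]; field_simp [sub_ne_zero.2 hab.ne']⟩

lemma cos_pos_of_mem_uIcc {a b ξ : ℝ} (ha : a ∈ Ioo (-(π / 2)) (π / 2))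
    (hb : b ∈ Ioo (-(π / 2)) (π / 2)) (hξ : ξ ∈ uIcc a b) : 0 < cos ξ :=
  cos_pos_of_mem_Ioo (ordConnected_Ioo.uIcc_subset ha hb hξ)

lemma exists_mem_uIcc_tan_sub {a b : ℝ} (ha : a ∈ Ioo (-(π / 2)) (π / 2))
    (hb : b ∈ Ioo (-(π / 2)) (π / 2)) :
    ∃ ξ ∈ uIcc a b, tan b - tan a = 1 / cos ξ ^ 2 * (b - a) :=
  exists_mem_uIcc_sub_eq_mul_sub fun _ hx => hasDerivAt_tan (cos_pos_of_mem_uIcc ha hb hx).ne'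

lemma exists_mem_uIcc_inv_cos_sub {a b : ℝ} (ha : a ∈ Ioo (-(π / 2)) (π / 2))
    (hb : b ∈ Ioo (-(π / 2)) (π / 2)) :
    ∃ ξ ∈ uIcc a b, 1 / cos b - 1 / cos a = sin ξ / cos ξ ^ 2 * (b - a) :=
  exists_mem_uIcc_sub_eq_mul_sub (f := fun y => 1 / cos y) fun x hx => by
    simpa [one_div, neg_div] using
      (hasDerivAt_cos x).fun_inv (cos_pos_of_mem_uIcc ha hb hx).ne'

lemma min_cos_le_cos_of_mem_uIcc {a b ξ : ℝ} (ha : a ∈ Ioo (-(π / 2)) (π / 2))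
    (hb : b ∈ Ioo (-(π / 2)) (π / 2)) (hξ : ξ ∈ uIcc a b) : min (cos a) (cos b) ≤ cos ξ :=
  strictConcaveOn_cos_Icc.concaveOn.min_le_of_mem_segment (Ioo_subset_Icc_self ha)
    (Ioo_subset_Icc_self hb) (segment_eq_uIcc a b ▸ hξ)

lemma inv_cos_sq_le_of_mem_uIcc {a b ξ : ℝ} (ha : a ∈ Ioo (-(π / 2)) (π / 2))
    (hb : b ∈ Ioo (-(π / 2)) (π / 2)) (hξ : ξ ∈ uIcc a b) :
    1 / cos ξ ^ 2 ≤ 1 / min (cos a) (cos b) ^ 2 := by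
  have hmin : 0 < min (cos a) (cos b) := lt_min (cos_pos_of_mem_Ioo ha) (cos_pos_of_mem_Ioo hb)
  gcongr
  exact min_cos_le_cos_of_mem_uIcc ha hb hξ

lemma abs_inv_cos_sq_sub_one_le {x : ℝ} (hx : |x| ≤ 1) : |1 / cos x ^ 2 - 1| ≤ 4 * x ^ 2 := by
  have hcos : 1 / 2 ≤ cos x := by
    nlinarith [one_sub_sq_div_two_le_cos (x := x), sq_abs x, abs_nonneg x]
  have hsin : sin x ^ 2 ≤ x ^ 2 := sin_sq_le_sq
  have h : 1 / cos x ^ 2 - 1 = sin x ^ 2 / cos x ^ 2 := by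
    field_simp
    linarith [sin_sq_add_cos_sq x]
  have hcos2 : 0 ≤ cos x ^ 2 - 1 / 4 := by nlinarith
  rw [h, abs_of_nonneg (by positivity), div_le_iff₀ (by positivity)]
  nlinarith [mul_nonneg (sq_nonneg x) hcos2]

lemma mul_le_sin_div_cos_sq {x : ℝ} (h0 : 0 ≤ x) (h1 : x < π / 2) :
    2 / π * x ≤ sin x / cos x ^ 2 := by
  have hcos : 0 < cos x := cos_pos_of_mem_Ioo ⟨by linarith [pi_pos], h1⟩
  have hsin : 0 ≤ sin x := sin_nonneg_of_nonneg_of_le_pi h0 (by linarith [pi_pos])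
  calc 2 / π * x ≤ sin x := mul_le_sin h0 h1.le
    _ ≤ sin x / cos x ^ 2 := le_div_self hsin (by positivity) (pow_le_one₀ hcos.le (cos_le_one x))

lemma abs_inv_mul_sub_one_le {r s ε : ℝ} (hε : ε ≤ 1 / 4) (hr : |r - 1| ≤ ε)
    (hs : |s - 1| ≤ ε) : |1 / (r * s) - 1| ≤ 4 * ε := by
  rw [abs_le] at hr hs ⊢
  have hrs : 9 / 16 ≤ r * s := by nlinarith
  constructor
  · rw [le_sub_iff_add_le, le_div_iff₀ (by linarith)]; nlinarith
  · rw [sub_le_iff_le_add, div_le_iff₀ (by linarith)]; nlinarith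

lemma quadratic_form_nonneg {p g e a b : ℝ} (hp : 0 < p) (he : e ^ 2 ≤ 4 * p * g) :
    0 ≤ p * a ^ 2 + g * b ^ 2 + e * a * b := by
  -- `p · (form) = (p a + e b / 2)² + (p g - e² / 4) b²`
  have : 0 ≤ p * (p * a ^ 2 + g * b ^ 2 + e * a * b) := by
    nlinarith [sq_nonneg (2 * p * a + e * b), sq_nonneg b]
  exact nonneg_of_mul_nonneg_right (by linarith) hp

lemma neg_mul_le_quadratic_form {p g e a b : ℝ} (hp : 0 ≤ p) :
    -((|g| + |e|) * (a ^ 2 + b ^ 2)) ≤ p * a ^ 2 + g * b ^ 2 + e * a * b := by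
  have hab : |a * b| ≤ a ^ 2 + b ^ 2 := by
    rw [abs_mul]; nlinarith [sq_abs a, sq_abs b, abs_nonneg a, abs_nonneg b]
  have h1 : -(|g| * b ^ 2) ≤ g * b ^ 2 := by nlinarith [neg_abs_le g, sq_nonneg b]
  have h2 : -(|e| * (a ^ 2 + b ^ 2)) ≤ e * a * b := by
    rw [mul_assoc]
    nlinarith [neg_abs_le (e * (a * b)), abs_mul e (a * b), abs_nonneg e, abs_nonneg (a * b)]
  nlinarith [mul_nonneg hp (sq_nonneg a), mul_nonneg (abs_nonneg g) (sq_nonneg a)]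

lemma quadratic_form_nonneg_of_near_equilibrium {Z r s a b ξ η u v : ℝ} (hZ : 9 ≤ Z)
    (ha : |a - 1 / (2 * Z)| ≤ 1 / 4 * |1 / Z|) (hb : |b - 1 / (2 * Z)| ≤ 1 / 4 * |1 / Z|)
    (hr : |r - 1| ≤ 1 / 16 * |1 / Z|) (hs : |s - 1| ≤ 1 / 16 * |1 / Z|)
    (hξ : ξ ∈ uIcc a b) (hη : η ∈ uIcc a b) :
    0 ≤ 1 / (2 * Z) * u ^ 2 + sin η / cos η ^ 2 * v ^ 2 +
      (1 / (r * s) - 1 / cos ξ ^ 2) * u * v := by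
  -- With `w = 1 / Z` we get `ξ, η ∈ [w/4, 3w/4]`, so the `v²` coefficient is `≥ w / (2π)` and the
  -- `u v` coefficient is at most `w / 2` in absolute value: within the bound `e² ≤ 4 p g`.
  set w := 1 / Z with hw_def
  have hw : 0 < w := by positivity
  have hw9 : w ≤ 1 / 9 := by rw [hw_def, div_le_div_iff₀ (by linarith) (by norm_num)]; linarith
  have hZw : 1 / (2 * Z) = w / 2 := by rw [hw_def]; field_simp
  rw [abs_of_pos hw] at ha hb hr hs
  rw [hZw] at ha hb ⊢
  have hab : uIcc a b ⊆ Icc (w / 4) (3 * w / 4) := by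
    rw [abs_le] at ha hb
    exact uIcc_subset_Icc ⟨by linarith, by linarith⟩ ⟨by linarith, by linarith⟩
  obtain ⟨hξ₁, hξ₂⟩ := hab hξ
  obtain ⟨hη₁, hη₂⟩ := hab hη
  have hg : 2 / π * (w / 4) ≤ sin η / cos η ^ 2 :=
    (mul_le_mul_of_nonneg_left hη₁ (by positivity)).trans
      (mul_le_sin_div_cos_sq (by linarith) (by linarith [pi_gt_three]))
  have hcos : |1 / cos ξ ^ 2 - 1| ≤ w / 4 := by
    have hξ0 : 0 ≤ ξ := by linarith
    calc |1 / cos ξ ^ 2 - 1| ≤ 4 * ξ ^ 2 :=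
          abs_inv_cos_sq_sub_one_le (by rw [abs_of_nonneg hξ0]; linarith)
      _ ≤ 4 * (3 * w / 4) ^ 2 := by gcongr
      _ ≤ w / 4 := by nlinarith
  have hrs : |1 / (r * s) - 1| ≤ w / 4 := by
    have := abs_inv_mul_sub_one_le (by linarith) hr hs
    linarith
  have he : |1 / (r * s) - 1 / cos ξ ^ 2| ≤ w / 2 := by
    refine (abs_sub_le _ 1 _).trans ?_
    rw [abs_sub_comm 1]
    linarith
  refine quadratic_form_nonneg (by positivity) ?_
  have hπ : 2 / π * (w / 4) * (2 * w) ≥ w ^ 2 / 4 := by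
    rw [ge_iff_le, div_mul_eq_mul_div, div_mul_eq_mul_div, le_div_iff₀ pi_pos]
    nlinarith [pi_lt_four]
  nlinarith [sq_abs (1 / (r * s) - 1 / cos ξ ^ 2), abs_nonneg (1 / (r * s) - 1 / cos ξ ^ 2)]

lemma abs_sin_div_cos_sq_add_abs_sub_le {a b ξ η r : ℝ} (ha : a ∈ Ioo (-(π / 2)) (π / 2))
    (hb : b ∈ Ioo (-(π / 2)) (π / 2)) (hξ : ξ ∈ uIcc a b) (hη : η ∈ uIcc a b) (hr : 0 < r) :
    |sin η / cos η ^ 2| + |1 / r - 1 / cos ξ ^ 2| ≤ 2 / min (cos a) (cos b) ^ 2 + 1 / r := by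
  have hcξ := inv_cos_sq_le_of_mem_uIcc ha hb hξ
  have hcη := inv_cos_sq_le_of_mem_uIcc ha hb hη
  have hg : |sin η / cos η ^ 2| ≤ 1 / cos η ^ 2 := by
    rw [abs_div, abs_of_nonneg (sq_nonneg (cos η))]
    exact div_le_div_of_nonneg_right (abs_sin_le_one η) (sq_nonneg _)
  have he : |1 / r - 1 / cos ξ ^ 2| ≤ 1 / r + 1 / cos ξ ^ 2 :=
    (abs_sub _ _).trans (by rw [abs_of_pos (by positivity), abs_of_nonneg (by positivity)])
  have h2 : 2 / min (cos a) (cos b) ^ 2 =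
      1 / min (cos a) (cos b) ^ 2 + 1 / min (cos a) (cos b) ^ 2 := by
    ring
  linarith

lemma le_zero_of_neg_mul_le_deriv {f : ℝ → ℝ} {C a b : ℝ} (hab : a ≤ b)
    (hf : ∀ t ∈ Icc a b, DifferentiableAt ℝ f t) (hC : ∀ t ∈ Icc a b, -(C * f t) ≤ deriv f t)
    (hb : f b ≤ 0) : f a ≤ 0 := by
  have hM : ∀ t ∈ Icc a b, HasDerivAt (fun s => f s * exp (C * s))
      ((deriv f t + C * f t) * exp (C * t)) t := fun t ht => by
    refine ((hf t ht).hasDerivAt.fun_mul ((hasDerivAt_const_mul C).exp)).congr_deriv ?_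
    ring
  have hmono : MonotoneOn (fun s => f s * exp (C * s)) (Icc a b) := by
    refine monotoneOn_of_deriv_nonneg (convex_Icc a b)
      (fun t ht => (hM t ht).continuousAt.continuousWithinAt)
      (fun t ht => (hM t (interior_subset ht)).differentiableAt.differentiableWithinAt)
      fun t ht => ?_
    rw [(hM t (interior_subset ht)).deriv]
    exact mul_nonneg (by linarith [hC t (interior_subset ht)]) (exp_pos _).le
  have := hmono (left_mem_Icc.2 hab) (right_mem_Icc.2 hab) hab
  have hMb : f b * exp (C * b) ≤ 0 := mul_nonpos_of_nonpos_of_nonneg hb (exp_pos _).le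
  exact nonpos_of_mul_nonpos_left (this.trans hMb) (exp_pos _)

-- To second order this is `2 (H(1, 0) - H(1 + Rt - R, θt - θ))`, the Hessian of `H` at `(1, 0)`
-- being `diag (-(n - 1), -1)`.
def lyapunov (n : ℕ) (R θ Rt θt : ℝ → ℝ) (Z : ℝ) : ℝ :=
  ((n : ℝ) - 1) * (Rt Z - R Z) ^ 2 + (θt Z - θ Z) ^ 2

section Lyapunov

variable {n : ℕ} {R θ Rt θt : ℝ → ℝ}

lemma sq_add_sq_le_lyapunov (hn : 2 ≤ n) (Z : ℝ) :
    (Rt Z - R Z) ^ 2 + (θt Z - θ Z) ^ 2 ≤ lyapunov n R θ Rt θt Z := by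
  have : (1 : ℝ) ≤ n - 1 := by
    rw [le_sub_iff_add_le]; exact_mod_cast hn
  unfold lyapunov
  nlinarith [sq_nonneg (Rt Z - R Z)]

lemma lyapunov_nonneg (hn : 1 ≤ n) (Z : ℝ) : 0 ≤ lyapunov n R θ Rt θt Z := by
  have : (0 : ℝ) ≤ n - 1 := by rw [sub_nonneg]; exact_mod_cast hn
  unfold lyapunov
  positivity

lemma eq_of_lyapunov_eq_zero (hn : 2 ≤ n) {Z : ℝ} (h : lyapunov n R θ Rt θt Z = 0) :
    R Z = Rt Z ∧ θ Z = θt Z := by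
  have := sq_add_sq_le_lyapunov (R := R) (θ := θ) (Rt := Rt) (θt := θt) hn Z
  rw [h] at this
  constructor <;> nlinarith [sq_nonneg (Rt Z - R Z), sq_nonneg (θt Z - θ Z)]

lemma tendsto_lyapunov (h : Tendsto (fun Z => (R Z, θ Z)) atTop (nhds (1, 0)))
    (ht : Tendsto (fun Z => (Rt Z, θt Z)) atTop (nhds (1, 0))) :
    Tendsto (lyapunov n R θ Rt θt) atTop (nhds 0) := by
  unfold lyapunov
  simpa using
    (((ht.fst_nhds.sub h.fst_nhds).pow 2).const_mul ((n : ℝ) - 1)).add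
      ((ht.snd_nhds.sub h.snd_nhds).pow 2)

namespace IsSingularSolution

variable (hS : IsSingularSolution n R θ) (hSt : IsSingularSolution n Rt θt)
include hS hSt

lemma exists_hasDerivAt_lyapunov {Z : ℝ} (hZ : 0 < Z) :
    ∃ ξ ∈ uIcc (θ Z) (θt Z), ∃ η ∈ uIcc (θ Z) (θt Z),
      HasDerivAt (lyapunov n R θ Rt θt) (2 * ((n : ℝ) - 1) *
        (1 / (2 * Z) * (Rt Z - R Z) ^ 2 + sin η / cos η ^ 2 * (θt Z - θ Z) ^ 2 +
          (1 / (R Z * Rt Z) - 1 / cos ξ ^ 2) * (Rt Z - R Z) * (θt Z - θ Z))) Z := by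
  obtain ⟨hpos, hdR, hdθ⟩ := hS
  obtain ⟨hpost, hdRt, hdθt⟩ := hSt
  obtain ⟨hR, hθ⟩ := hpos Z hZ
  obtain ⟨hRt, hθt⟩ := hpost Z hZ
  obtain ⟨ξ, hξ, htan⟩ := exists_mem_uIcc_tan_sub hθ hθt
  obtain ⟨η, hη, hsec⟩ := exists_mem_uIcc_inv_cos_sub hθ hθt
  refine ⟨ξ, hξ, η, hη, ?_⟩
  have hcosξ := (cos_pos_of_mem_uIcc hθ hθt hξ).ne'
  refine (((((hdRt Z hZ).sub (hdR Z hZ)).pow 2).const_mul ((n : ℝ) - 1)).add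
    (((hdθt Z hZ).sub (hdθ Z hZ)).pow 2)).congr_deriv ?_
  rw [Pi.sub_apply, Pi.sub_apply, eq_add_of_sub_eq htan, eq_add_of_sub_eq hsec]
  field_simp
  ring

lemma eventually_deriv_lyapunov_nonneg (hn : 1 ≤ n)
    (hR : (fun Z => R Z - 1) =o[atTop] fun Z : ℝ => 1 / Z)
    (hθ : (fun Z => θ Z - 1 / (2 * Z)) =o[atTop] fun Z : ℝ => 1 / Z)
    (hRt : (fun Z => Rt Z - 1) =o[atTop] fun Z : ℝ => 1 / Z)
    (hθt : (fun Z => θt Z - 1 / (2 * Z)) =o[atTop] fun Z : ℝ => 1 / Z) :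
    ∀ᶠ Z in atTop, 0 ≤ deriv (lyapunov n R θ Rt θt) Z := by
  filter_upwards [eventually_ge_atTop 9, hθ.bound (by norm_num : (0 : ℝ) < 1 / 4),
    hθt.bound (by norm_num : (0 : ℝ) < 1 / 4), hR.bound (by norm_num : (0 : ℝ) < 1 / 16),
    hRt.bound (by norm_num : (0 : ℝ) < 1 / 16)] with Z hZ ha hb hr hs
  obtain ⟨ξ, hξ, η, hη, hL⟩ := exists_hasDerivAt_lyapunov hS hSt (by linarith : (0 : ℝ) < Z)
  have hn' : (0 : ℝ) ≤ n - 1 := by rw [sub_nonneg]; exact_mod_cast hn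
  rw [hL.deriv]
  simp only [Real.norm_eq_abs] at ha hb hr hs
  exact mul_nonneg (by positivity)
    (quadratic_form_nonneg_of_near_equilibrium hZ ha hb hr hs hξ hη)

lemma exists_neg_mul_lyapunov_le_deriv (hn : 2 ≤ n) {a b : ℝ} (ha : 0 < a) :
    ∃ C, ∀ t ∈ Icc a b, -(C * lyapunov n R θ Rt θt t) ≤ deriv (lyapunov n R θ Rt θt) t := by
  obtain ⟨hpos, hdR, hdθ⟩ := hS
  obtain ⟨hpost, hdRt, hdθt⟩ := hSt
  set k : ℝ → ℝ := fun t =>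
    2 * ((n : ℝ) - 1) * (2 / min (cos (θ t)) (cos (θt t)) ^ 2 + 1 / (R t * Rt t))
  have hk : ContinuousOn k (Icc a b) := fun t ht => by
    have ht0 : 0 < t := ha.trans_le ht.1
    have := (hdR t ht0).continuousAt
    have := (hdRt t ht0).continuousAt
    have := (hdθ t ht0).continuousAt
    have := (hdθt t ht0).continuousAt
    have hmin : min (cos (θ t)) (cos (θt t)) ^ 2 ≠ 0 :=
      (pow_pos (lt_min (cos_pos_of_mem_Ioo (hpos t ht0).2)
        (cos_pos_of_mem_Ioo (hpost t ht0).2)) 2).ne'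
    have hRR : R t * Rt t ≠ 0 := (mul_pos (hpos t ht0).1 (hpost t ht0).1).ne'
    exact ContinuousAt.continuousWithinAt (by fun_prop (disch := assumption))
  obtain ⟨C, hC⟩ := isCompact_Icc.bddAbove_image hk
  refine ⟨C, fun t ht => ?_⟩
  have ht0 : 0 < t := ha.trans_le ht.1
  obtain ⟨ξ, hξ, η, hη, hL⟩ :=
    exists_hasDerivAt_lyapunov ⟨hpos, hdR, hdθ⟩ ⟨hpost, hdRt, hdθt⟩ ht0
  have hkC : k t ≤ C := hC ⟨t, ht, rfl⟩
  have hn' : (1 : ℝ) ≤ n - 1 := by rw [le_sub_iff_add_le]; exact_mod_cast hn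
  have hbound := abs_sin_div_cos_sq_add_abs_sub_le (hpos t ht0).2 (hpost t ht0).2 hξ hη
    (mul_pos (hpos t ht0).1 (hpost t ht0).1)
  have hsq := sq_add_sq_le_lyapunov (R := R) (θ := θ) (Rt := Rt) (θt := θt) hn t
  have hL0 := lyapunov_nonneg (R := R) (θ := θ) (Rt := Rt) (θt := θt) (by omega : 1 ≤ n) t
  rw [hL.deriv]
  calc -(C * lyapunov n R θ Rt θt t) ≤ -(k t * lyapunov n R θ Rt θt t) := by nlinarith
    _ ≤ 2 * ((n : ℝ) - 1) * -((|sin η / cos η ^ 2| + |1 / (R t * Rt t) - 1 / cos ξ ^ 2|) *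
          ((Rt t - R t) ^ 2 + (θt t - θ t) ^ 2)) := by
      have hGK := mul_le_mul hbound hsq (by positivity)
        ((add_nonneg (abs_nonneg _) (abs_nonneg _)).trans hbound)
      have := mul_le_mul_of_nonneg_left hGK (by linarith : (0 : ℝ) ≤ 2 * ((n : ℝ) - 1))
      simp only [k]
      linarith
    _ ≤ _ := mul_le_mul_of_nonneg_left (neg_mul_le_quadratic_form (by positivity)) (by positivity)

lemma differentiableAt_lyapunov {Z : ℝ} (hZ : 0 < Z) :
    DifferentiableAt ℝ (lyapunov n R θ Rt θt) Z := by
  obtain ⟨_, _, _, _, hL⟩ := exists_hasDerivAt_lyapunov hS hSt hZ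
  exact hL.differentiableAt

lemma eventually_lyapunov_eq_zero (hn : 1 ≤ n)
    (hlim : Tendsto (fun Z => (R Z, θ Z)) atTop (nhds (1, 0)))
    (hlimt : Tendsto (fun Z => (Rt Z, θt Z)) atTop (nhds (1, 0)))
    (hR : (fun Z => R Z - 1) =o[atTop] fun Z : ℝ => 1 / Z)
    (hθ : (fun Z => θ Z - 1 / (2 * Z)) =o[atTop] fun Z : ℝ => 1 / Z)
    (hRt : (fun Z => Rt Z - 1) =o[atTop] fun Z : ℝ => 1 / Z)
    (hθt : (fun Z => θt Z - 1 / (2 * Z)) =o[atTop] fun Z : ℝ => 1 / Z) :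
    ∀ᶠ Z in atTop, lyapunov n R θ Rt θt Z = 0 := by
  obtain ⟨Z₀, hZ₀⟩ := eventually_atTop.1 ((eventually_deriv_lyapunov_nonneg hS hSt hn hR hθ hRt
    hθt).and (eventually_gt_atTop 0))
  have hdiff : ∀ Z ∈ Ici Z₀, DifferentiableAt ℝ (lyapunov n R θ Rt θt) Z := fun Z hZ =>
    differentiableAt_lyapunov hS hSt (hZ₀ Z hZ).2
  have hmono : MonotoneOn (lyapunov n R θ Rt θt) (Ici Z₀) :=
    monotoneOn_of_deriv_nonneg (convex_Ici Z₀)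
      (fun Z hZ => (hdiff Z hZ).continuousAt.continuousWithinAt)
      (fun Z hZ => (hdiff Z (interior_subset hZ)).differentiableWithinAt)
      (fun Z hZ => (hZ₀ Z (interior_subset hZ)).1)
  filter_upwards [eventually_ge_atTop Z₀] with Z hZ
  refine le_antisymm (ge_of_tendsto (tendsto_lyapunov (n := n) hlim hlimt) ?_)
    (lyapunov_nonneg hn Z)
  filter_upwards [eventually_ge_atTop Z] with Y hY
  exact hmono hZ (hZ.trans hY) hY

lemma lyapunov_eq_zero_of_le (hn : 2 ≤ n) {Z Z₁ : ℝ} (hZ : 0 < Z) (hZZ₁ : Z ≤ Z₁)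
    (h₁ : lyapunov n R θ Rt θt Z₁ = 0) : lyapunov n R θ Rt θt Z = 0 := by
  obtain ⟨C, hC⟩ := exists_neg_mul_lyapunov_le_deriv hS hSt hn hZ (b := Z₁)
  refine le_antisymm ?_ (lyapunov_nonneg (by omega) Z)
  exact le_zero_of_neg_mul_le_deriv hZZ₁
    (fun t ht => differentiableAt_lyapunov hS hSt (hZ.trans_le ht.1)) hC h₁.le

end IsSingularSolution

end Lyapunov

theorem uniqueness_of_singular_solution (n : ℕ) (hn : 2 ≤ n)
    (hyp : ∀ R θ : ℝ → ℝ, IsSingularSolution n R θ →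
      Tendsto (fun Z => (R Z, θ Z)) atTop (nhds (1, 0)) ∧
      ((fun Z => R Z - 1) =o[atTop] fun Z : ℝ => 1 / Z) ∧
      ((fun Z => θ Z - 1 / (2 * Z)) =o[atTop] fun Z : ℝ => 1 / Z)) :
    ∀ R θ Rt θt : ℝ → ℝ, IsSingularSolution n R θ → IsSingularSolution n Rt θt →
      ∀ Z > (0 : ℝ), R Z = Rt Z ∧ θ Z = θt Z := by
  intro R θ Rt θt hS hSt Z hZ
  obtain ⟨hlim, hR, hθ⟩ := hyp R θ hS
  obtain ⟨hlimt, hRt, hθt⟩ := hyp Rt θt hSt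
  obtain ⟨Z₁, hL₁, hZZ₁⟩ := ((hS.eventually_lyapunov_eq_zero hSt (by omega) hlim hlimt hR hθ hRt
    hθt).and (eventually_ge_atTop Z)).exists
  exact eq_of_lyapunov_eq_zero hn (hS.lyapunov_eq_zero_of_le hSt hn hZ hZZ₁ hL₁)
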